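/- arXiv:1407.4877 — 2 statements merged into one kernel-verified Lean document; each statement's English description precedes it below -/
import Mathlib

section
/- For every integer d ≥ 4, the quantity (2 − (4/3)d)·2·(d−1)^{2d−1} + (d/3)·∑_{s=1}^{2d−2} 2·(d−2)^{2d−2−s}·(s−1)·C(2d−2, s) + (d/3)·(2d−2)·∑_{s=1}^{2d−3} (d−1)·(d−2)^{2d−3−s}·s·C(2d−3, s) is a negative rational number, where C(n,s) denotes the binomial coefficient. -/
/-!
With `x = d - 2`, both sums are evaluated by the binomial theorem and its derivative:
`∑ x^(n-s) C(n,s) = (x+1)^n - x^n` and `∑ s x^(n-s) C(n,s) = n (x+1)^(n-1)` (sums over `1 ≤ s ≤ n`).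
The quantity collapses to `(2/3)(d (d-2)^(2d-2) - 2 (d-3) (d-1)^(2d-1))`, which is negative because
`(d-2)^(2d-2) ≤ (d-1)^(2d-2)` and `d < 2 (d-3) (d-1)` once `d ≥ 4`.
-/

open Finset

theorem sum_range_succ_eq_add_sum_Icc {M : Type*} [AddCommMonoid M] (f : ℕ → M) (n : ℕ) :
    ∑ i ∈ range (n + 1), f i = f 0 + ∑ i ∈ Icc 1 n, f i := by
  rw [range_eq_Ico, sum_eq_sum_Ico_succ_bot n.succ_pos]
  rfl

section Binomial

variable {R : Type*}

theorem sum_Icc_pow_mul_choose [CommRing R] (x : R) (n : ℕ) :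
    ∑ s ∈ Icc 1 n, x ^ (n - s) * (n.choose s : R) = (x + 1) ^ n - x ^ n := by
  rw [add_comm x, add_pow, sum_range_succ_eq_add_sum_Icc]
  simp

theorem sum_Icc_pow_mul_mul_choose [CommSemiring R] (x : R) (n : ℕ) :
    ∑ s ∈ Icc 1 n, x ^ (n - s) * (s : R) * (n.choose s : R) = n * (x + 1) ^ (n - 1) := by
  cases n with
  | zero => simp
  | succ m =>
    have hrange := sum_range_succ_eq_add_sum_Icc
      (fun s => x ^ (m + 1 - s) * (s : R) * ((m + 1).choose s : R)) (m + 1)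
    have hterm (i : ℕ) : x ^ (m + 1 - (i + 1)) * ((i + 1 : ℕ) : R) * ((m + 1).choose (i + 1) : R)
        = (m + 1 : ℕ) * (1 ^ i * x ^ (m - i) * (m.choose i : R)) := by
      have h : ((m + 1 : ℕ) : R) * (m.choose i : R) = (m + 1).choose (i + 1) * ((i + 1 : ℕ) : R) := by
        rw [← Nat.cast_mul, ← Nat.cast_mul, Nat.add_one_mul_choose_eq]
      rw [Nat.add_sub_add_right, one_pow, one_mul, mul_assoc, mul_comm ((i + 1 : ℕ) : R), ← h]
      ring
    simp only [Nat.cast_zero, mul_zero, zero_mul, zero_add] at hrange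
    rw [← hrange, sum_range_succ', sum_congr rfl fun i _ => hterm i, ← mul_sum, ← add_pow]
    simp [add_comm]

theorem sum_Icc_pow_mul_sub_one_mul_choose [CommRing R] (x : R) (n : ℕ) :
    ∑ s ∈ Icc 1 n, x ^ (n - s) * ((s : R) - 1) * (n.choose s : R)
      = n * (x + 1) ^ (n - 1) - ((x + 1) ^ n - x ^ n) := by
  rw [← sum_Icc_pow_mul_mul_choose, ← sum_Icc_pow_mul_choose, ← sum_sub_distrib]
  exact sum_congr rfl fun s _ => by ring

end Binomial

theorem mul_sub_two_pow_lt_two_mul_sub_three_mul_sub_one_pow {K : Type*}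
    [Field K] [LinearOrder K] [IsStrictOrderedRing K] {x : K} (hx : 4 ≤ x) (n : ℕ) :
    x * (x - 2) ^ n < 2 * (x - 3) * (x - 1) ^ (n + 1) := by
  have hpow : (x - 2) ^ n ≤ (x - 1) ^ n := pow_le_pow_left₀ (by linarith) (by linarith) n
  have hquad : x < 2 * (x - 3) * (x - 1) := by nlinarith
  calc x * (x - 2) ^ n ≤ x * (x - 1) ^ n := by gcongr
    _ < 2 * (x - 3) * (x - 1) * (x - 1) ^ n := by gcongr; exact pow_pos (by linarith) n
    _ = 2 * (x - 3) * (x - 1) ^ (n + 1) := by ring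

theorem d_gonal_intersection_eq (d : ℕ) (hd : 2 ≤ d) :
    (2 - (4 / 3) * (d : ℚ)) * 2 * ((d : ℚ) - 1) ^ (2 * d - 1)
      + ((d : ℚ) / 3) * ∑ s ∈ Finset.Icc 1 (2 * d - 2),
          2 * ((d : ℚ) - 2) ^ (2 * d - 2 - s) * ((s : ℚ) - 1) * (Nat.choose (2 * d - 2) s : ℚ)
      + ((d : ℚ) / 3) * (2 * (d : ℚ) - 2) * ∑ s ∈ Finset.Icc 1 (2 * d - 3),
          ((d : ℚ) - 1) * ((d : ℚ) - 2) ^ (2 * d - 3 - s) * (s : ℚ) * (Nat.choose (2 * d - 3) s : ℚ)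
      = 2 / 3 * (d * ((d : ℚ) - 2) ^ (2 * d - 2) - 2 * ((d : ℚ) - 3) * ((d : ℚ) - 1) ^ (2 * d - 1)) := by
  have hsum₁ : ∑ s ∈ Icc 1 (2 * d - 2),
      2 * ((d : ℚ) - 2) ^ (2 * d - 2 - s) * ((s : ℚ) - 1) * (Nat.choose (2 * d - 2) s : ℚ)
      = 2 * ∑ s ∈ Icc 1 (2 * d - 2),
          ((d : ℚ) - 2) ^ (2 * d - 2 - s) * ((s : ℚ) - 1) * (Nat.choose (2 * d - 2) s : ℚ) := by
    rw [mul_sum]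
    exact sum_congr rfl fun _ _ => by ring
  have hsum₂ : ∑ s ∈ Icc 1 (2 * d - 3),
      ((d : ℚ) - 1) * ((d : ℚ) - 2) ^ (2 * d - 3 - s) * (s : ℚ) * (Nat.choose (2 * d - 3) s : ℚ)
      = ((d : ℚ) - 1) * ∑ s ∈ Icc 1 (2 * d - 3),
          ((d : ℚ) - 2) ^ (2 * d - 3 - s) * (s : ℚ) * (Nat.choose (2 * d - 3) s : ℚ) := by
    rw [mul_sum]
    exact sum_congr rfl fun _ _ => by ring
  rw [hsum₁, hsum₂, sum_Icc_pow_mul_sub_one_mul_choose, sum_Icc_pow_mul_mul_choose]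
  obtain ⟨m, rfl⟩ : ∃ m, d = m + 2 := ⟨d - 2, by omega⟩
  rw [show 2 * (m + 2) - 2 - 1 = 2 * m + 1 by omega, show 2 * (m + 2) - 3 - 1 = 2 * m by omega,
    show 2 * (m + 2) - 1 = 2 * m + 3 by omega, show 2 * (m + 2) - 2 = 2 * m + 2 by omega,
    show 2 * (m + 2) - 3 = 2 * m + 1 by omega]
  push_cast
  ring

/-- For every integer `d ≥ 4`, the normalized intersection number
`(1/c)·B·π*BN¹_d` from Lemma 4.2,
`(2 − (4/3)d)·2·(d−1)^(2d−1)
  + (d/3)·∑_{s=1}^{2d−2} 2·(d−2)^(2d−2−s)·(s−1)·C(2d−2,s)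
  + (d/3)·(2d−2)·∑_{s=1}^{2d−3} (d−1)·(d−2)^(2d−3−s)·s·C(2d−3,s)`,
is a negative rational number. -/
theorem d_gonal_intersection_negative (d : ℕ) (hd : 4 ≤ d) :
    (2 - (4 / 3) * (d : ℚ)) * 2 * ((d : ℚ) - 1) ^ (2 * d - 1)
      + ((d : ℚ) / 3) * ∑ s ∈ Finset.Icc 1 (2 * d - 2),
          2 * ((d : ℚ) - 2) ^ (2 * d - 2 - s) * ((s : ℚ) - 1) * (Nat.choose (2 * d - 2) s : ℚ)
      + ((d : ℚ) / 3) * (2 * (d : ℚ) - 2) * ∑ s ∈ Finset.Icc 1 (2 * d - 3),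
          ((d : ℚ) - 1) * ((d : ℚ) - 2) ^ (2 * d - 3 - s) * (s : ℚ) * (Nat.choose (2 * d - 3) s : ℚ)
      < 0 := by
  rw [d_gonal_intersection_eq d (by omega)]
  have hbound := mul_sub_two_pow_lt_two_mul_sub_three_mul_sub_one_pow
    (show (4 : ℚ) ≤ d by exact_mod_cast hd) (2 * d - 2)
  rw [show 2 * d - 2 + 1 = 2 * d - 1 by omega] at hbound
  linarith
end

section
/- Let m ≥ 3 be an integer and consider the index set {1, 2, …, 2m} partitioned into the m pairs {2k−1, 2k} for k = 1, …, m. Then there is no function a : {1, …, 2m} → ℤ, not identically zero, with ∑_{i=1}^{2m} a(i) = 0, such that for every permutation σ of {1, …, 2m} which is either (i) the transposition exchanging 2k−1 and 2k for some k, or (ii) for some j < k the involution exchanging 2j−1 with 2k−1 and 2j with 2k and fixing all other indices, one has a∘σ = a or a∘σ = −a. -/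
/-- Let `m ≥ 3` and consider `{1, …, 2m}` (here realized as `Fin (2m)`)
partitioned into the `m` pairs `{2k−1, 2k}` (here `{2k, 2k+1}` for `k : Fin m`).
There is no function `a : Fin (2m) → ℤ`, not identically zero, with
`∑ a i = 0`, such that for every permutation `σ` which is either
(i) the transposition exchanging the two elements of one of the pairs, or
(ii) for `j < k`, the involution exchanging the pair `j` with the pair `k`
componentwise and fixing all other indices, one has `a ∘ σ = a` or `a ∘ σ = −a`. -/
theorem no_sign_symmetric_vector (m : ℕ) (hm : 3 ≤ m) :
    ¬ ∃ a : Fin (2 * m) → ℤ,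
      a ≠ 0 ∧
      (∑ i, a i) = 0 ∧
      (∀ k : Fin m,
        a ∘ (Equiv.swap
              (⟨2 * k.1, by have := k.2; omega⟩ : Fin (2 * m))
              (⟨2 * k.1 + 1, by have := k.2; omega⟩ : Fin (2 * m))) = a ∨
        a ∘ (Equiv.swap
              (⟨2 * k.1, by have := k.2; omega⟩ : Fin (2 * m))
              (⟨2 * k.1 + 1, by have := k.2; omega⟩ : Fin (2 * m))) = -a) ∧
      (∀ j k : Fin m, j < k →
        a ∘ ((Equiv.swap
                (⟨2 * j.1, by have := j.2; omega⟩ : Fin (2 * m))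
                (⟨2 * k.1, by have := k.2; omega⟩ : Fin (2 * m))).trans
             (Equiv.swap
                (⟨2 * j.1 + 1, by have := j.2; omega⟩ : Fin (2 * m))
                (⟨2 * k.1 + 1, by have := k.2; omega⟩ : Fin (2 * m)))) = a ∨
        a ∘ ((Equiv.swap
                (⟨2 * j.1, by have := j.2; omega⟩ : Fin (2 * m))
                (⟨2 * k.1, by have := k.2; omega⟩ : Fin (2 * m))).trans
             (Equiv.swap
                (⟨2 * j.1 + 1, by have := j.2; omega⟩ : Fin (2 * m))
                (⟨2 * k.1 + 1, by have := k.2; omega⟩ : Fin (2 * m)))) = -a) := by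
  
  rintro ⟨a, ha0, hsum, hpair, hexch⟩
  -- pointwise version of the pair condition
  have hpair' : ∀ k : Fin m,
      a ⟨2 * k.1 + 1, by have := k.2; omega⟩ = a ⟨2 * k.1, by have := k.2; omega⟩ ∨
      (a ⟨2 * k.1 + 1, by have := k.2; omega⟩ = - a ⟨2 * k.1, by have := k.2; omega⟩ ∧
        ∀ i : Fin (2 * m), i.1 ≠ 2 * k.1 → i.1 ≠ 2 * k.1 + 1 → a i = 0) := by
    intro k
    rcases hpair k with h | h
    · left
      have h1 := congrFun h (⟨2 * k.1, by have := k.2; omega⟩ : Fin (2 * m))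
      rwa [Function.comp_apply, Equiv.swap_apply_left] at h1
    · right
      refine ⟨?_, ?_⟩
      · have h1 := congrFun h (⟨2 * k.1, by have := k.2; omega⟩ : Fin (2 * m))
        rwa [Function.comp_apply, Equiv.swap_apply_left, Pi.neg_apply] at h1
      · intro i hi1 hi2
        have h2 := congrFun h i
        rw [Function.comp_apply,
          Equiv.swap_apply_of_ne_of_ne (Fin.ne_of_val_ne hi1) (Fin.ne_of_val_ne hi2),
          Pi.neg_apply] at h2
        omega
  -- pointwise version of the exchange condition
  have hexch' : ∀ j k : Fin m, j < k →
      a ⟨2 * k.1, by have := k.2; omega⟩ = a ⟨2 * j.1, by have := j.2; omega⟩ ∨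
      (a ⟨2 * k.1, by have := k.2; omega⟩ = - a ⟨2 * j.1, by have := j.2; omega⟩ ∧
        ∀ i : Fin (2 * m), i.1 ≠ 2 * j.1 → i.1 ≠ 2 * j.1 + 1 →
          i.1 ≠ 2 * k.1 → i.1 ≠ 2 * k.1 + 1 → a i = 0) := by
    intro j k hjk
    have hne1 : (2 * k.1 : ℕ) ≠ 2 * j.1 + 1 := by omega
    have hne2 : (2 * k.1 : ℕ) ≠ 2 * k.1 + 1 := by omega
    rcases hexch j k hjk with h | h
    · left
      have h1 := congrFun h (⟨2 * j.1, by have := j.2; omega⟩ : Fin (2 * m))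
      rwa [Function.comp_apply, Equiv.trans_apply, Equiv.swap_apply_left,
        Equiv.swap_apply_of_ne_of_ne (Fin.ne_of_val_ne hne1) (Fin.ne_of_val_ne hne2)] at h1
    · right
      refine ⟨?_, ?_⟩
      · have h1 := congrFun h (⟨2 * j.1, by have := j.2; omega⟩ : Fin (2 * m))
        rwa [Function.comp_apply, Equiv.trans_apply, Equiv.swap_apply_left,
          Equiv.swap_apply_of_ne_of_ne (Fin.ne_of_val_ne hne1) (Fin.ne_of_val_ne hne2),
          Pi.neg_apply] at h1
      · intro i h1 h2 h3 h4
        have h5 := congrFun h i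
        have e1 : Equiv.swap (⟨2 * j.1, by have := j.2; omega⟩ : Fin (2 * m))
            (⟨2 * k.1, by have := k.2; omega⟩ : Fin (2 * m)) i = i :=
          Equiv.swap_apply_of_ne_of_ne (Fin.ne_of_val_ne h1) (Fin.ne_of_val_ne h3)
        rw [Function.comp_apply, Equiv.trans_apply, e1,
          Equiv.swap_apply_of_ne_of_ne (Fin.ne_of_val_ne h2) (Fin.ne_of_val_ne h4),
          Pi.neg_apply] at h5
        omega
  by_cases hA : ∀ k : Fin m,
      a ⟨2 * k.1 + 1, by have := k.2; omega⟩ = a ⟨2 * k.1, by have := k.2; omega⟩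
  · -- all in-pair swaps act trivially
    have hAll : ∀ i : Fin (2 * m), a i = a ⟨2 * (i.1 / 2), by have := i.2; omega⟩ := by
      intro i
      by_cases hpar : i.1 % 2 = 0
      · have hi : i = ⟨2 * (i.1 / 2), by have := i.2; omega⟩ := Fin.ext (by simp; omega)
        exact congrArg a hi
      · have hi : i = ⟨2 * (i.1 / 2) + 1, by have := i.2; omega⟩ := Fin.ext (by simp; omega)
        exact (congrArg a hi).trans (hA ⟨i.1 / 2, by have := i.2; omega⟩)
    have hex : ∃ i, a i ≠ 0 := by
      by_contra h
      push_neg at h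
      exact ha0 (funext h)
    obtain ⟨i0, hi0⟩ := hex
    obtain ⟨j0, hj0⟩ : ∃ j0 : Fin m, a ⟨2 * j0.1, by have := j0.2; omega⟩ ≠ 0 := by
      refine ⟨⟨i0.1 / 2, by have := i0.2; omega⟩, fun h => hi0 ?_⟩
      rw [hAll i0]
      exact h
    have claim : ∀ k' : Fin m, k' ≠ j0 →
        a ⟨2 * k'.1, by have := k'.2; omega⟩ = a ⟨2 * j0.1, by have := j0.2; omega⟩ ∨
        (a ⟨2 * k'.1, by have := k'.2; omega⟩ = - a ⟨2 * j0.1, by have := j0.2; omega⟩ ∧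
          ∀ l : Fin m, l ≠ j0 → l ≠ k' → a ⟨2 * l.1, by have := l.2; omega⟩ = 0) := by
      intro k' hk'
      rcases lt_or_gt_of_ne hk' with hlt | hlt
      · rcases hexch' k' j0 hlt with h | ⟨h, hv⟩
        · exact Or.inl h.symm
        · refine Or.inr ⟨by omega, ?_⟩
          intro l hl1 hl2
          have hlj : l.1 ≠ j0.1 := fun hh => hl1 (Fin.ext hh)
          have hlk : l.1 ≠ k'.1 := fun hh => hl2 (Fin.ext hh)
          exact hv ⟨2 * l.1, by have := l.2; omega⟩
            (show 2 * l.1 ≠ 2 * k'.1 by omega) (show 2 * l.1 ≠ 2 * k'.1 + 1 by omega)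
            (show 2 * l.1 ≠ 2 * j0.1 by omega) (show 2 * l.1 ≠ 2 * j0.1 + 1 by omega)
      · rcases hexch' j0 k' hlt with h | ⟨h, hv⟩
        · exact Or.inl h
        · refine Or.inr ⟨h, ?_⟩
          intro l hl1 hl2
          have hlj : l.1 ≠ j0.1 := fun hh => hl1 (Fin.ext hh)
          have hlk : l.1 ≠ k'.1 := fun hh => hl2 (Fin.ext hh)
          exact hv ⟨2 * l.1, by have := l.2; omega⟩
            (show 2 * l.1 ≠ 2 * j0.1 by omega) (show 2 * l.1 ≠ 2 * j0.1 + 1 by omega)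
            (show 2 * l.1 ≠ 2 * k'.1 by omega) (show 2 * l.1 ≠ 2 * k'.1 + 1 by omega)
    by_cases hC : ∀ k' : Fin m,
        a ⟨2 * k'.1, by have := k'.2; omega⟩ = a ⟨2 * j0.1, by have := j0.2; omega⟩
    · -- constant vector, contradicts the sum condition
      have hall : ∀ i : Fin (2 * m), a i = a ⟨2 * j0.1, by have := j0.2; omega⟩ :=
        fun i => (hAll i).trans (hC ⟨i.1 / 2, by have := i.2; omega⟩)
      have hs2 : (∑ i, a i) = (2 * (m : ℤ)) * a ⟨2 * j0.1, by have := j0.2; omega⟩ := by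
        rw [Finset.sum_congr rfl fun i _ => hall i, Finset.sum_const, Finset.card_univ,
          Fintype.card_fin, nsmul_eq_mul]
        push_cast
        ring
      rw [hsum] at hs2
      rcases mul_eq_zero.mp hs2.symm with h | h
      · have hmz : (m : ℤ) = 0 := by omega
        have : m = 0 := by exact_mod_cast hmz
        omega
      · exact hj0 h
    · push_neg at hC
      obtain ⟨k'0, hk'0⟩ := hC
      have hne : k'0 ≠ j0 := by
        intro h
        rw [h] at hk'0
        exact hk'0 rfl
      rcases claim k'0 hne with h | ⟨hval, hvan2⟩
      · exact hk'0 h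
      · obtain ⟨t, ht1, ht2, ht3⟩ : ∃ t : ℕ, t < m ∧ t ≠ j0.1 ∧ t ≠ k'0.1 := by
          by_cases h1 : 0 = j0.1 ∨ 0 = k'0.1
          · by_cases h2 : 1 = j0.1 ∨ 1 = k'0.1
            · exact ⟨2, by omega⟩
            · exact ⟨1, by omega⟩
          · exact ⟨0, by omega⟩
        have hz : a ⟨2 * t, by omega⟩ = 0 :=
          hvan2 ⟨t, ht1⟩ (Fin.ne_of_val_ne ht2) (Fin.ne_of_val_ne ht3)
        rcases claim ⟨t, ht1⟩ (Fin.ne_of_val_ne ht2) with h | ⟨h, -⟩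
        · have h' : a ⟨2 * t, by omega⟩ = a ⟨2 * j0.1, by have := j0.2; omega⟩ := h
          exact hj0 (h'.symm.trans hz)
        · have h' : a ⟨2 * t, by omega⟩ = - a ⟨2 * j0.1, by have := j0.2; omega⟩ := h
          exact hj0 (neg_eq_zero.mp (h'.symm.trans hz))
  · -- some in-pair swap acts by -1
    push_neg at hA
    obtain ⟨k, hk⟩ := hA
    rcases hpair' k with h | ⟨hOk, hvan⟩
    · exact hk h
    · have hc : a ⟨2 * k.1, by have := k.2; omega⟩ ≠ 0 := by
        intro h0
        apply hk
        rw [hOk, h0, neg_zero]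
      by_cases hk0 : k.1 = 0
      · have hlt : k < (⟨1, by omega⟩ : Fin m) := by
          show k.1 < 1
          omega
        have hz : a ⟨2, by omega⟩ = 0 :=
          hvan ⟨2, by omega⟩ (show (2 : ℕ) ≠ 2 * k.1 by omega)
            (show (2 : ℕ) ≠ 2 * k.1 + 1 by omega)
        rcases hexch' k ⟨1, by omega⟩ hlt with h | ⟨h, -⟩
        · have h' : a ⟨2, by omega⟩ = a ⟨2 * k.1, by have := k.2; omega⟩ := h
          exact hc (h'.symm.trans hz)
        · have h' : a ⟨2, by omega⟩ = - a ⟨2 * k.1, by have := k.2; omega⟩ := h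
          exact hc (neg_eq_zero.mp (h'.symm.trans hz))
      · have hlt : (⟨0, by omega⟩ : Fin m) < k := by
          show 0 < k.1
          omega
        have hz : a ⟨0, by omega⟩ = 0 :=
          hvan ⟨0, by omega⟩ (show (0 : ℕ) ≠ 2 * k.1 by omega)
            (show (0 : ℕ) ≠ 2 * k.1 + 1 by omega)
        rcases hexch' ⟨0, by omega⟩ k hlt with h | ⟨h, -⟩
        · have h' : a ⟨2 * k.1, by have := k.2; omega⟩ = a ⟨0, by omega⟩ := h
          exact hc (h'.trans hz)
        · have h' : a ⟨2 * k.1, by have := k.2; omega⟩ = - a ⟨0, by omega⟩ := h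
          exact hc (by rw [h', hz, neg_zero])
end
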